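/- arXiv:2105.15174 — 2 statements merged into one kernel-verified Lean document; each statement's English description precedes it below -/
import Mathlib

section
/- Let K be Hermitian positive definite and Γ Hermitian positive semidefinite, with eigendecomposition K^{-1/2} Γ K^{-1/2} = U Σ U^H, Σ = diag(p₁,…,p_n). Then the matrix Q* = K^{-1/2} U Λ U^H K^{-1/2}, where Λ_ii = max(1 − σ²/p_i, 0), is a global maximizer of f(Q) = log det(I + Γ Q / σ²) − tr(K Q) over Hermitian positive semidefinite Q. -/
/-!
With `W = Uᴴ S⁻¹` one has `K = Wᴴ W` and `Γ = Wᴴ diag(p) W`, so the objective at `Q` equals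
`log det (I + diag(p) M / σ²) - tr M` for `M = W Q Wᴴ ⪰ 0`, and `Q*` corresponds to `M = Λ`.
By Hadamard's inequality `det (I + F M F) ≤ ∏ᵢ (1 + pᵢ Mᵢᵢ / σ²)` (with `F² = diag(p) / σ²`),
so the problem decouples into the scalar problems `max_{m ≥ 0} log (1 + p m / σ²) - m`,
each solved by the water level `m = max (1 - σ² / p, 0)`.
-/

open Matrix ComplexOrder

namespace Matrix.PosDef

variable {𝕜 ι : Type*} [RCLike 𝕜] [Fintype ι] [DecidableEq ι]

theorem log_re_det_le_re_trace_sub_card {X : Matrix ι ι 𝕜} (hX : X.PosDef) :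
    Real.log (RCLike.re X.det) ≤ RCLike.re X.trace - Fintype.card ι := by
  have hpos := hX.eigenvalues_pos
  rw [hX.isHermitian.det_eq_prod_eigenvalues, hX.isHermitian.trace_eq_sum_eigenvalues,
    ← RCLike.ofReal_prod, ← RCLike.ofReal_sum, RCLike.ofReal_re, RCLike.ofReal_re,
    Real.log_prod fun i _ => (hpos i).ne']
  calc ∑ i, Real.log (hX.isHermitian.eigenvalues i)
      ≤ ∑ i, (hX.isHermitian.eigenvalues i - 1) :=
        Finset.sum_le_sum fun i _ => Real.log_le_sub_one_of_pos (hpos i)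
    _ = _ := by simp [Finset.sum_sub_distrib]

theorem re_det_le_prod_re_diag {B : Matrix ι ι 𝕜} (hB : B.PosDef) :
    RCLike.re B.det ≤ ∏ i, RCLike.re (B i i) := by
  -- Rescaled to unit diagonal, `B` has `log det ≤ tr - n = 0`.
  have hd : ∀ i, 0 < RCLike.re (B i i) := fun i => (RCLike.pos_iff.mp hB.diag_pos).1
  let g : ι → ℝ := fun i => (√(RCLike.re (B i i)))⁻¹
  have hg : ∀ i, g i * g i = (RCLike.re (B i i))⁻¹ := fun i => by
    simp only [g, ← mul_inv, Real.mul_self_sqrt (hd i).le]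
  let G : Matrix ι ι 𝕜 := diagonal fun i => (g i : 𝕜)
  have hGH : Gᴴ = G := by simp [G, diagonal_conjTranspose, RCLike.star_def]
  have hG : IsUnit G := by
    simp only [G, isUnit_diagonal, Pi.isUnit_iff, isUnit_iff_ne_zero, ne_eq, RCLike.ofReal_eq_zero]
    exact fun i => inv_ne_zero (Real.sqrt_ne_zero'.mpr (hd i))
  have hX : (G * B * G).PosDef := by
    simpa [hGH] using hB.conjTranspose_mul_mul_same (mulVec_injective_iff_isUnit.mpr hG)
  have hXtrace : RCLike.re (G * B * G).trace = Fintype.card ι := by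
    have hdiag : ∀ i, (G * B * G) i i = 1 := fun i => by
      simp only [G, diagonal_mul, mul_diagonal]
      rw [← hB.isHermitian.coe_re_apply_self i, ← RCLike.ofReal_one,
        ← inv_mul_cancel₀ (hd i).ne', ← hg i]
      push_cast
      ring
    simp [trace, hdiag]
  have hXdet : RCLike.re (G * B * G).det = (∏ i, RCLike.re (B i i))⁻¹ * RCLike.re B.det := by
    simp only [det_mul, G, det_diagonal]
    rw [← RCLike.ofReal_prod, mul_right_comm, ← RCLike.ofReal_mul, RCLike.re_ofReal_mul,
      ← Finset.prod_mul_distrib, Finset.prod_congr rfl fun i _ => hg i, Finset.prod_inv_distrib]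
  have hlog := hX.log_re_det_le_re_trace_sub_card
  rw [hXtrace, sub_self, Real.log_nonpos_iff (RCLike.pos_iff.mp hX.det_pos).1.le, hXdet,
    inv_mul_le_iff₀ (Finset.prod_pos fun i _ => hd i), mul_one] at hlog
  exact hlog

end Matrix.PosDef

-- The `p = 0` branch matters: `σ2 / 0 = 0`, so `max (1 - σ2 / 0) 0 = 1`.
noncomputable def waterLevel (σ2 p : ℝ) : ℝ := if p = 0 then 0 else max (1 - σ2 / p) 0

lemma waterLevel_nonneg (σ2 p : ℝ) : 0 ≤ waterLevel σ2 p := by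
  unfold waterLevel; split_ifs <;> simp

lemma log_one_add_mul_div_sub_le_waterLevel {σ2 p m : ℝ} (hσ2 : 0 < σ2) (hp : 0 ≤ p)
    (hm : 0 ≤ m) :
    Real.log (1 + p * m / σ2) - m ≤
      Real.log (1 + p * waterLevel σ2 p / σ2) - waterLevel σ2 p := by
  rcases hp.eq_or_lt with rfl | hp
  · simp [waterLevel, hm]
  have hb : 0 < 1 + p * m / σ2 := by positivity
  -- `log b - log a ≤ b / a - 1` for `a = 1 + p w / σ2`: this equals `m - w` when `w > 0`,
  -- and is `p m / σ2 ≤ m` when `w = 0` (then `p < σ2`).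
  rcases le_or_gt σ2 p with hle | hlt
  · have hw : waterLevel σ2 p = 1 - σ2 / p := by
      rw [waterLevel, if_neg hp.ne', max_eq_left (sub_nonneg.mpr ((div_le_one hp).mpr hle))]
    have ha : 1 + p * waterLevel σ2 p / σ2 = p / σ2 := by
      rw [hw]; field_simp; ring
    have hlog := Real.log_le_sub_one_of_pos (div_pos hb (div_pos hp hσ2))
    rw [Real.log_div hb.ne' (div_pos hp hσ2).ne'] at hlog
    rw [ha, hw]
    have h : (1 + p * m / σ2) / (p / σ2) - 1 = m - (1 - σ2 / p) := by field_simp; ring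
    linarith
  · have hw : waterLevel σ2 p = 0 := by
      rw [waterLevel, if_neg hp.ne', max_eq_right (sub_nonpos.mpr ((one_le_div hp).mpr hlt.le))]
    have hlog := Real.log_le_sub_one_of_pos hb
    have h : p * m / σ2 ≤ m := by
      rw [div_le_iff₀ hσ2]; nlinarith
    rw [hw, mul_zero, zero_div, add_zero, Real.log_one, sub_zero]
    linarith

section PenalizedRate

variable {ι : Type*} [Fintype ι] [DecidableEq ι]

noncomputable def penalizedRate (σ2 : ℝ) (K Γ Q : Matrix ι ι ℂ) : ℝ :=
  Real.log ((1 + ((σ2 : ℂ))⁻¹ • (Γ * Q)).det.re) - (K * Q).trace.re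

lemma penalizedRate_conjTranspose_mul (σ2 : ℝ) (W D Q : Matrix ι ι ℂ) :
    penalizedRate σ2 (Wᴴ * W) (Wᴴ * D * W) Q = penalizedRate σ2 1 D (W * Q * Wᴴ) := by
  have hdet : (1 + ((σ2 : ℂ))⁻¹ • (Wᴴ * D * W * Q)).det =
      (1 + ((σ2 : ℂ))⁻¹ • (D * (W * Q * Wᴴ))).det := by
    rw [Matrix.mul_assoc, Matrix.mul_assoc, ← mul_smul_comm, det_one_add_mul_comm,
      smul_mul_assoc]
    simp only [Matrix.mul_assoc]
  rw [penalizedRate, penalizedRate, hdet, Matrix.one_mul, Matrix.mul_assoc Wᴴ,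
    trace_mul_comm Wᴴ]

lemma penalizedRate_one_diagonal {σ2 : ℝ} {p q : ι → ℝ} (hpq : ∀ i, 0 < 1 + p i * q i / σ2) :
    penalizedRate σ2 1 (diagonal fun i => (p i : ℂ)) (diagonal fun i => (q i : ℂ)) =
      ∑ i, (Real.log (1 + p i * q i / σ2) - q i) := by
  have h : 1 + ((σ2 : ℂ))⁻¹ • (diagonal (fun i => (p i : ℂ)) * diagonal fun i => (q i : ℂ)) =
      diagonal fun i => ((1 + p i * q i / σ2 : ℝ) : ℂ) := by
    ext i j
    rcases eq_or_ne i j with rfl | hij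
    · simp only [diagonal_mul_diagonal, Matrix.add_apply, one_apply_eq, Matrix.smul_apply,
        diagonal_apply_eq, smul_eq_mul, Complex.ofReal_add, Complex.ofReal_one, Complex.ofReal_div,
        Complex.ofReal_mul, add_right_inj]
      ring
    · simp [hij]
  rw [penalizedRate, h, det_diagonal, ← Complex.ofReal_prod, Complex.ofReal_re,
    Real.log_prod fun i _ => (hpq i).ne', Matrix.one_mul, trace_diagonal, ← Complex.ofReal_sum,
    Complex.ofReal_re, Finset.sum_sub_distrib]

lemma penalizedRate_one_diagonal_le {σ2 : ℝ} (hσ2 : 0 < σ2) {p : ι → ℝ} (hp : ∀ i, 0 ≤ p i)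
    {M : Matrix ι ι ℂ} (hM : M.PosSemidef) :
    penalizedRate σ2 1 (diagonal fun i => (p i : ℂ)) M ≤
      ∑ i, (Real.log (1 + p i * (M i i).re / σ2) - (M i i).re) := by
  let F : Matrix ι ι ℂ := diagonal fun i => ((√(p i / σ2) : ℝ) : ℂ)
  have hFH : Fᴴ = F := by simp [F, diagonal_conjTranspose, Complex.conj_ofReal]
  have hFF : F * F = ((σ2 : ℂ))⁻¹ • diagonal fun i => (p i : ℂ) := by
    rw [diagonal_mul_diagonal, ← diagonal_smul]
    congr 1
    ext i
    rw [← Complex.ofReal_mul, Real.mul_self_sqrt (div_nonneg (hp i) hσ2.le)]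
    simp [div_eq_inv_mul]
  have hB : (1 + F * M * F).PosDef := by
    simpa [hFH] using PosDef.one.add_posSemidef (hM.conjTranspose_mul_mul_same F)
  have hdet : (1 + ((σ2 : ℂ))⁻¹ • (diagonal (fun i => (p i : ℂ)) * M)).det =
      (1 + F * M * F).det := by
    rw [← smul_mul_assoc, ← hFF, Matrix.mul_assoc, det_one_add_mul_comm, Matrix.mul_assoc]
  have hBdiag : ∀ i, ((1 + F * M * F) i i).re = 1 + p i * (M i i).re / σ2 := by
    intro i
    simp only [F, Matrix.add_apply, one_apply_eq, diagonal_mul, mul_diagonal]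
    rw [mul_right_comm, ← Complex.ofReal_mul, Real.mul_self_sqrt (div_nonneg (hp i) hσ2.le),
      Complex.add_re, Complex.one_re, Complex.re_ofReal_mul]
    ring
  calc penalizedRate σ2 1 (diagonal fun i => (p i : ℂ)) M
      ≤ Real.log (∏ i, ((1 + F * M * F) i i).re) - M.trace.re := by
        rw [penalizedRate, hdet, Matrix.one_mul]
        gcongr
        · exact (RCLike.pos_iff.mp hB.det_pos).1
        · exact hB.re_det_le_prod_re_diag
    _ = _ := by
        rw [Real.log_prod, trace, Complex.re_sum, ← Finset.sum_sub_distrib]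
        · simp only [hBdiag, diag_apply]
        · intro i _
          rw [hBdiag]
          exact add_pos_of_pos_of_nonneg one_pos (div_nonneg (mul_nonneg (hp i)
            (Complex.nonneg_iff.mp hM.diag_nonneg).1) hσ2.le) |>.ne'

lemma penalizedRate_one_diagonal_le_waterLevel {σ2 : ℝ} (hσ2 : 0 < σ2) {p : ι → ℝ}
    (hp : ∀ i, 0 ≤ p i) {M : Matrix ι ι ℂ} (hM : M.PosSemidef) :
    penalizedRate σ2 1 (diagonal fun i => (p i : ℂ)) M ≤
      penalizedRate σ2 1 (diagonal fun i => (p i : ℂ))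
        (diagonal fun i => (waterLevel σ2 (p i) : ℂ)) := by
  rw [penalizedRate_one_diagonal fun i => ?_]
  · exact (penalizedRate_one_diagonal_le hσ2 hp hM).trans <| Finset.sum_le_sum fun i _ =>
      log_one_add_mul_div_sub_le_waterLevel hσ2 (hp i) (Complex.nonneg_iff.mp hM.diag_nonneg).1
  · have := hp i
    have := waterLevel_nonneg σ2 (p i)
    positivity

end PenalizedRate

theorem sar_aware_water_filling_general {n : ℕ}
    (K Γ S : Matrix (Fin n) (Fin n) ℂ) (hK : K.PosDef)
    (hS : S.PosSemidef) (hSS : S * S = K⁻¹)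
    (U : Matrix (Fin n) (Fin n) ℂ) (hU : U ∈ Matrix.unitaryGroup (Fin n) ℂ)
    (p : Fin n → ℝ) (hp : ∀ i, 0 ≤ p i)
    (hdecomp : S * Γ * S = U * Matrix.diagonal (fun i => (p i : ℂ)) * Uᴴ)
    (σ2 : ℝ) (hσ2 : 0 < σ2) :
    let Λ : Matrix (Fin n) (Fin n) ℂ :=
      Matrix.diagonal (fun i => if p i = 0 then 0 else ((max (1 - σ2 / p i) 0 : ℝ) : ℂ))
    let Qstar : Matrix (Fin n) (Fin n) ℂ := S * U * Λ * Uᴴ * S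
    let f : Matrix (Fin n) (Fin n) ℂ → ℝ := fun Q =>
      Real.log ((1 + ((σ2 : ℂ))⁻¹ • (Γ * Q)).det.re) - (K * Q).trace.re
    Qstar.PosSemidef ∧ ∀ Q : Matrix (Fin n) (Fin n) ℂ, Q.PosSemidef → f Q ≤ f Qstar := by
  intro Λ Qstar f
  have hΛ : Λ = diagonal fun i => (waterLevel σ2 (p i) : ℂ) := by
    simp only [Λ, waterLevel, apply_ite Complex.ofReal, Complex.ofReal_zero]
  have hKunit : IsUnit K.det := hK.det_pos.ne'.isUnit
  have hSunit : IsUnit S.det := isUnit_of_mul_isUnit_left <| by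
    rwa [← det_mul, hSS, isUnit_nonsing_inv_det_iff]
  let := invertibleOfIsUnitDet S hSunit
  have hSH : Sᴴ = S := hS.isHermitian.eq
  have hU1 : Uᴴ * U = 1 := hU.1
  have hU2 : U * Uᴴ = 1 := hU.2
  set W := Uᴴ * S⁻¹
  have hWH : Wᴴ = S⁻¹ * U := by
    rw [conjTranspose_mul, conjTranspose_nonsing_inv, hSH, conjTranspose_conjTranspose]
  have hKW : K = Wᴴ * W := by
    rw [hWH, Matrix.mul_assoc, ← Matrix.mul_assoc U, hU2, Matrix.one_mul, ← Matrix.mul_inv_rev,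
      hSS, nonsing_inv_nonsing_inv _ hKunit]
  have hΓW : Γ = Wᴴ * diagonal (fun i => (p i : ℂ)) * W :=
    calc Γ = S⁻¹ * (S * Γ * S) * S⁻¹ := by simp [Matrix.mul_assoc]
      _ = _ := by rw [hdecomp, hWH]; simp only [W, Matrix.mul_assoc]
  have hWQstar : W * Qstar * Wᴴ = Λ := by
    simp only [hWH, W, Qstar, Matrix.mul_assoc, inv_mul_cancel_left_of_invertible,
      mul_inv_cancel_left_of_invertible]
    rw [← Matrix.mul_assoc, hU1, Matrix.one_mul, Matrix.mul_one]
  refine ⟨?_, fun Q hQ => ?_⟩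
  · have := (posSemidef_diagonal_iff.mpr fun i => Complex.zero_le_real.mpr
      (waterLevel_nonneg σ2 (p i))).mul_mul_conjTranspose_same (S * U)
    rwa [conjTranspose_mul, hSH, ← Matrix.mul_assoc, ← hΛ] at this
  · change penalizedRate σ2 K Γ Q ≤ penalizedRate σ2 K Γ Qstar
    rw [hKW, hΓW, penalizedRate_conjTranspose_mul, penalizedRate_conjTranspose_mul, hWQstar, hΛ]
    exact penalizedRate_one_diagonal_le_waterLevel hσ2 hp (hQ.mul_mul_conjTranspose_same W)

/-- Proposition 1: Let `K ≻ 0`, `Γ ⪰ 0`, and let `S = K^{-1/2}`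
(the PSD square root of `K⁻¹`). With the eigendecomposition
`S Γ S = U diag(p) Uᴴ` (`U` unitary, `p ≥ 0`), the matrix
`Q* = S U Λ Uᴴ S`, `Λᵢᵢ = max(1 − σ²/pᵢ, 0)` (and `0` when `pᵢ = 0`),
globally maximizes `log det(I + Γ Q/σ²) − tr(K Q)` over Hermitian PSD `Q`. -/
theorem sar_aware_water_filling {n : ℕ}
    (K Γ S : Matrix (Fin n) (Fin n) ℂ) (hK : K.PosDef) (hΓ : Γ.PosSemidef)
    (hS : S.PosSemidef) (hSS : S * S = K⁻¹)
    (U : Matrix (Fin n) (Fin n) ℂ) (hU : U ∈ Matrix.unitaryGroup (Fin n) ℂ)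
    (p : Fin n → ℝ) (hp : ∀ i, 0 ≤ p i)
    (hdecomp : S * Γ * S = U * Matrix.diagonal (fun i => (p i : ℂ)) * Uᴴ)
    (σ2 : ℝ) (hσ2 : 0 < σ2) :
    let Λ : Matrix (Fin n) (Fin n) ℂ :=
      Matrix.diagonal (fun i => if p i = 0 then 0 else ((max (1 - σ2 / p i) 0 : ℝ) : ℂ))
    let Qstar : Matrix (Fin n) (Fin n) ℂ := S * U * Λ * Uᴴ * S
    let f : Matrix (Fin n) (Fin n) ℂ → ℝ := fun Q =>
      Real.log ((1 + ((σ2 : ℂ))⁻¹ • (Γ * Q)).det.re) - (K * Q).trace.re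
    Qstar.PosSemidef ∧ ∀ Q : Matrix (Fin n) (Fin n) ℂ, Q.PosSemidef → f Q ≤ f Qstar :=
  sar_aware_water_filling_general K Γ S hK hS hSS U hU p hp hdecomp σ2 hσ2
end

section
/- The set of η ∈ ℝ for which the Dinkelbach value F(η) = max_{x∈C} (f(x) − η g(x)) is nonnegative is exactly the interval (−∞, η*], where η* = max_{x∈C} f(x)/g(x), for a compact set C and continuous f, g with g > 0 on C. -/
/-- For compact nonempty `C` and continuous `f, g` with `g > 0`,
the Dinkelbach value `F η = max_{x∈C} (f x − η * g x)` is nonnegative exactly for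
`η ≤ η* = max_{x∈C} f x / g x`, and `F η* = 0`. -/
theorem dinkelbach_root_characterization
    {C : Type*} [TopologicalSpace C] [CompactSpace C] [Nonempty C]
    (f g : C → ℝ) (hf : Continuous f) (hg : Continuous g)
    (hgpos : ∀ x : C, 0 < g x) :
    let F : ℝ → ℝ := fun η => sSup (Set.range fun x => f x - η * g x)
    let ηstar : ℝ := sSup (Set.range fun x => f x / g x)
    (∀ η : ℝ, 0 ≤ F η ↔ η ≤ ηstar) ∧ F ηstar = 0 := by
  intro F ηstar
  have hr : Continuous fun x => f x / g x :=
    hf.div hg (fun x => (hgpos x).ne')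
  -- x* attains the max of the ratio
  obtain ⟨xs, hxs⟩ := hr.exists_forall_ge (by rw [Filter.cocompact_eq_bot]; exact Filter.tendsto_bot)
  have hxs' : ∀ y : C, f y / g y ≤ f xs / g xs := hxs
  have hbddr : BddAbove (Set.range fun x => f x / g x) :=
    ⟨f xs / g xs, by rintro _ ⟨y, rfl⟩; exact hxs' y⟩
  have hstar_eq : ηstar = f xs / g xs := by
    apply le_antisymm
    · exact csSup_le (Set.range_nonempty _) (by rintro _ ⟨y, rfl⟩; exact hxs' y)
    · exact le_csSup hbddr ⟨xs, rfl⟩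
  have hle_star : ∀ y : C, f y / g y ≤ ηstar := fun y => hstar_eq ▸ hxs' y
  -- for each η, the max of f - η g is attained
  have hmax : ∀ η : ℝ, ∃ x : C, (∀ y : C, f y - η * g y ≤ f x - η * g x) ∧
      F η = f x - η * g x := by
    intro η
    have hc : Continuous fun x => f x - η * g x := hf.sub (continuous_const.mul hg)
    obtain ⟨x, hx⟩ := hc.exists_forall_ge (by rw [Filter.cocompact_eq_bot]; exact Filter.tendsto_bot)
    have hx' : ∀ y : C, f y - η * g y ≤ f x - η * g x := hx
    refine ⟨x, hx', le_antisymm ?_ ?_⟩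
    · exact csSup_le (Set.range_nonempty _) (by rintro _ ⟨y, rfl⟩; exact hx' y)
    · exact le_csSup ⟨f x - η * g x, by rintro _ ⟨y, rfl⟩; exact hx' y⟩ ⟨x, rfl⟩
  have key : ∀ η : ℝ, 0 ≤ F η ↔ η ≤ ηstar := by
    intro η
    obtain ⟨x, hx, hFx⟩ := hmax η
    constructor
    · intro h
      rw [hFx] at h
      have : η ≤ f x / g x := (le_div_iff₀ (hgpos x)).mpr (by linarith)
      exact this.trans (hle_star x)
    · intro h
      rw [hFx]
      have h1 : η ≤ f xs / g xs := h.trans_eq hstar_eq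
      have h2 : η * g xs ≤ f xs := (le_div_iff₀ (hgpos xs)).mp h1
      have := hx xs
      linarith
  refine ⟨key, le_antisymm ?_ ((key ηstar).mpr le_rfl)⟩
  obtain ⟨x, hx, hFx⟩ := hmax ηstar
  rw [hFx]
  have : f x / g x ≤ ηstar := hle_star x
  have := (div_le_iff₀ (hgpos x)).mp this
  linarith
end
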